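/- In the Zhu algebra A(V), the image [ω] of the conformal vector lies in the center: [ω] * [a] = [a] * [ω] for all a ∈ V. -/

import Mathlib

/-- Generalized binomial coefficient `C(n, k)` for `n : ℤ`, valued in `ℂ`. -/
noncomputable def cbinom (n : ℤ) (k : ℕ) : ℂ :=
  (∏ i ∈ Finset.range k, ((n : ℂ) - (i : ℂ))) / (Nat.factorial k : ℂ)

/-- A vertex operator algebra structure on a complex vector space `V`. -/
structure VOA (V : Type) [AddCommGroup V] [Module ℂ V] where
  mode : V → ℤ → Module.End ℂ V
  vacuum : V
  conformal : V
  grading : ℤ → Submodule ℂ V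
  internal : Function.Bijective (DirectSum.coeLinearMap grading)
  mode_add : ∀ (u v : V) (n : ℤ), mode (u + v) n = mode u n + mode v n
  mode_smul : ∀ (c : ℂ) (u : V) (n : ℤ), mode (c • u) n = c • mode u n
  truncation : ∀ u v : V, ∃ N : ℤ, ∀ n : ℤ, N ≤ n → mode u n v = 0
  vacuum_mem : vacuum ∈ grading 0
  conformal_mem : conformal ∈ grading 2
  vacuum_mode : ∀ (v : V) (n : ℤ), mode vacuum n v = if n = -1 then v else 0
  creation : ∀ (u : V) (n : ℤ), 0 ≤ n → mode u n vacuum = 0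
  creation_neg_one : ∀ u : V, mode u (-1) vacuum = u
  L0_eigen : ∀ (n : ℤ) (u : V), u ∈ grading n → mode conformal 1 u = (n : ℂ) • u
  Lneg1_deriv : ∀ (u : V) (n : ℤ), mode (mode conformal 0 u) n = (-n : ℂ) • mode u (n - 1)
  grading_mode : ∀ (r s m : ℤ) (u v : V), u ∈ grading r → v ∈ grading s →
    mode u m v ∈ grading (r + s - m - 1)
  bounded_below : ∃ N : ℤ, ∀ n : ℤ, n < N → grading n = ⊥
  fin_dim : ∀ n : ℤ, FiniteDimensional ℂ (grading n)
  borcherds : ∀ (p q r : ℤ) (u v w : V),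
    (∑ᶠ i : ℕ, cbinom p i • mode (mode u (r + i) v) (p + q - i) w) =
    ∑ᶠ i : ℕ, ((-1 : ℂ) ^ i * cbinom r i) •
      (mode u (p + r - i) (mode v (q + i) w)
        - (-1 : ℂ) ^ r • mode v (q + r - i) (mode u (p + i) w))

variable {V : Type} [AddCommGroup V] [Module ℂ V]

/-- Projection onto the weight-`n` subspace. -/
noncomputable def VOA.proj (d : VOA V) (n : ℤ) : V →ₗ[ℂ] V :=
  (d.grading n).subtype ∘ₗ (DirectSum.component ℂ ℤ (fun m => d.grading m) n) ∘ₗ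
    (LinearEquiv.ofBijective (DirectSum.coeLinearMap d.grading) d.internal).symm.toLinearMap

/-- `Res_z (1+z)^N z^{-k} Y(u,z)v` for a vector `u` regarded as having weight contribution `N`. -/
noncomputable def VOA.hres (d : VOA V) (N k : ℤ) (u v : V) : V :=
  ∑ᶠ i : ℕ, cbinom N i • d.mode u ((i : ℤ) - k) v

/-- `Res_z (1+z)^{wt u + m} z^{-k} Y(u,z)v`, extended bilinearly from homogeneous `u`. -/
noncomputable def VOA.bres (d : VOA V) (m k : ℤ) (u v : V) : V :=
  ∑ᶠ n : ℤ, d.hres (n + m) k (d.proj n u) v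

/-- The Zhu product `u * v`. -/
noncomputable def VOA.star (d : VOA V) (u v : V) : V := d.bres 0 1 u v

/-- The Zhu circle product `u ∘ v`. -/
noncomputable def VOA.circ (d : VOA V) (u v : V) : V := d.bres 0 2 u v

/-- The subspace `O(V)` spanned by all `u ∘ v`. -/
def VOA.Ozhu (d : VOA V) : Submodule ℂ V := Submodule.span ℂ {w : V | ∃ u v : V, w = d.circ u v}

/-- The product `u ∘_n v`. -/
noncomputable def VOA.circn (d : VOA V) (n : ℕ) (u v : V) : V := d.bres n (2 * n + 2) u v

/-- The product `u *_n v` of Dong–Li–Mason. -/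
noncomputable def VOA.starn (d : VOA V) (n : ℕ) (u v : V) : V :=
  ∑ m ∈ Finset.range (n + 1),
    ((-1 : ℂ) ^ m * cbinom ((m : ℤ) + (n : ℤ)) n) • d.bres n ((n : ℤ) + (m : ℤ) + 1) u v

/-- The subspace `O_n(V)`. -/
def VOA.On (d : VOA V) (n : ℕ) : Submodule ℂ V :=
  Submodule.span ℂ ({w : V | ∃ u v : V, w = d.circn n u v} ∪
    {w : V | ∃ u : V, w = d.mode d.conformal 0 u + d.mode d.conformal 1 u})

/-- The Dong–Jiang product `u *_{m,p}^n v`. -/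
noncomputable def VOA.starmpn (d : VOA V) (m p n : ℕ) (u v : V) : V :=
  ∑ i ∈ Finset.range (p + 1),
    ((-1 : ℂ) ^ i * cbinom ((m : ℤ) + (n : ℤ) - (p : ℤ) + (i : ℤ)) i) •
      d.bres m ((m : ℤ) + (n : ℤ) - (p : ℤ) + (i : ℤ) + 1) u v

/-- The Dong–Jiang product `u ∘_m^n v`. -/
noncomputable def VOA.circmn (d : VOA V) (n m : ℕ) (u v : V) : V :=
  d.bres m ((n : ℤ) + (m : ℤ) + 2) u v

/-- The subspace `O_{n,m}(V) = O'_{n,m}(V) + O''_{n,m}(V) + O'''_{n,m}(V)` of Dong–Jiang. -/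
def VOA.Onm (d : VOA V) (n m : ℕ) : Submodule ℂ V :=
  Submodule.span ℂ (
    {w : V | ∃ u v : V, w = d.circmn n m u v} ∪
    {w : V | ∃ u : V, w = d.mode d.conformal 0 u + d.mode d.conformal 1 u
        + (((m : ℂ) - (n : ℂ)) • u)} ∪
    {w : V | ∃ (u a b c : V) (p₁ p₂ p₃ : ℕ), w = d.starmpn m p₃ n u
        (d.starmpn m p₁ p₃ (d.starmpn p₁ p₂ p₃ a b) c
          - d.starmpn m p₂ p₃ a (d.starmpn m p₁ p₂ b c))} ∪
    {w : V | ∃ (p : ℕ) (u x v : V), x ∈ d.On p ∧ w = d.starmpn m p n (d.starmpn p p n u x) v})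

/-- The subspace `C_2(V)` spanned by the `u_{-2} v`. -/
def VOA.C2 (d : VOA V) : Submodule ℂ V := Submodule.span ℂ {w : V | ∃ u v : V, w = d.mode u (-2) v}

/-- `V` is a simple vertex operator algebra: its only ideals are `0` and `V`. -/
def VOA.IsSimpleVOA (d : VOA V) : Prop :=
  (∃ v : V, v ≠ 0) ∧ ∀ P : Submodule ℂ V,
    (∀ (u : V) (n : ℤ), ∀ w ∈ P, d.mode u n w ∈ P) → P = ⊥ ∨ P = ⊤

/-- A weak module for the vertex operator algebra `d`. -/
structure WeakMod (d : VOA V) (M : Type) [AddCommGroup M] [Module ℂ M] where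
  act : V → ℤ → Module.End ℂ M
  act_add : ∀ (u v : V) (n : ℤ), act (u + v) n = act u n + act v n
  act_smul : ∀ (c : ℂ) (u : V) (n : ℤ), act (c • u) n = c • act u n
  truncation : ∀ (u : V) (w : M), ∃ N : ℤ, ∀ n : ℤ, N ≤ n → act u n w = 0
  vacuum_act : ∀ (w : M) (n : ℤ), act d.vacuum n w = if n = -1 then w else 0
  borcherds : ∀ (p q r : ℤ) (u v : V) (w : M),
    (∑ᶠ i : ℕ, cbinom p i • act (d.mode u (r + i) v) (p + q - i) w) =
    ∑ᶠ i : ℕ, ((-1 : ℂ) ^ i * cbinom r i) •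
      (act u (p + r - i) (act v (q + i) w)
        - (-1 : ℂ) ^ r • act v (q + r - i) (act u (p + i) w))

/-- An admissible (ℤ₊-graded) module for the vertex operator algebra `d`. -/
structure AdmMod (d : VOA V) (M : Type) [AddCommGroup M] [Module ℂ M]
    extends WeakMod d M where
  gr : ℤ → Submodule ℂ M
  gr_internal : Function.Bijective (DirectSum.coeLinearMap gr)
  gr_neg : ∀ n : ℤ, n < 0 → gr n = ⊥
  gr_act : ∀ (r : ℤ) (u : V), u ∈ d.grading r → ∀ (m n : ℤ) (w : M), w ∈ gr n →
    act u m w ∈ gr (r + n - m - 1)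

variable {M : Type} [AddCommGroup M] [Module ℂ M]

/-- The zero-mode `o(v) = v_{wt v - 1}`, extended linearly from homogeneous `v`. -/
noncomputable def WeakMod.o {d : VOA V} (W : WeakMod d M) (v : V) (w : M) : M :=
  ∑ᶠ r : ℤ, W.act (d.proj r v) (r - 1) w

/-- The mode `o_t(v) = v_{wt v - 1 - t}`, extended linearly from homogeneous `v`. -/
noncomputable def WeakMod.ot {d : VOA V} (W : WeakMod d M) (t : ℤ) (v : V) (w : M) : M :=
  ∑ᶠ r : ℤ, W.act (d.proj r v) (r - 1 - t) w

/-- The subspace `Ω_n(M)` of a weak module. -/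
def WeakMod.OmegaSet {d : VOA V} (W : WeakMod d M) (n : ℕ) : Set M :=
  {w : M | ∀ (r : ℤ) (u : V), u ∈ d.grading r → ∀ m : ℤ, m > r - 1 + (n : ℤ) → W.act u m w = 0}

/-- A subspace stable under all modes. -/
def WeakMod.IsStable {d : VOA V} (W : WeakMod d M) (P : Submodule ℂ M) : Prop :=
  ∀ (u : V) (n : ℤ), ∀ w ∈ P, W.act u n w ∈ P

/-- A subspace compatible with the grading of an admissible module. -/
def AdmMod.IsGraded {d : VOA V} (A : AdmMod d M) (P : Submodule ℂ M) : Prop :=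
  P = ⨆ n : ℤ, (P ⊓ A.gr n)

/-- `P` is an irreducible admissible submodule. -/
def AdmMod.IrredSub {d : VOA V} (A : AdmMod d M) (P : Submodule ℂ M) : Prop :=
  P ≠ ⊥ ∧ A.toWeakMod.IsStable P ∧ A.IsGraded P ∧
    ∀ Q : Submodule ℂ M, Q ≤ P → A.toWeakMod.IsStable Q → A.IsGraded Q → Q = ⊥ ∨ Q = P

/-- The admissible module is irreducible. -/
def AdmMod.IsIrreducible {d : VOA V} (A : AdmMod d M) : Prop :=
  (∃ w : M, w ≠ 0) ∧
    ∀ P : Submodule ℂ M, A.toWeakMod.IsStable P → A.IsGraded P → P = ⊥ ∨ P = ⊤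

/-- Rationality: every admissible module is a direct sum of irreducible admissible submodules. -/
def Rational (d : VOA V) : Prop :=
  ∀ (M : Type) [AddCommGroup M] [Module ℂ M] (A : AdmMod d M),
    ∃ (ι : Type) (f : ι → Submodule ℂ M),
      (∀ i, A.IrredSub (f i)) ∧ iSupIndep f ∧ (⨆ i, f i) = ⊤

/-- Equivalence of admissible modules. -/
def AdmEquiv {d : VOA V} {M₁ M₂ : Type} [AddCommGroup M₁] [Module ℂ M₁]
    [AddCommGroup M₂] [Module ℂ M₂] (A₁ : AdmMod d M₁) (A₂ : AdmMod d M₂) : Prop :=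
  ∃ e : M₁ ≃ₗ[ℂ] M₂, ∀ (u : V) (n : ℤ) (w : M₁), e (A₁.act u n w) = A₂.act u n (e w)

/-- An ordinary-module structure on a weak module: a `ℂ`-grading by finite dimensional
`L(0)`-eigenspaces, bounded below in each coset of `ℤ`. -/
structure OrdinaryStruct {d : VOA V} (W : WeakMod d M) where
  grc : ℂ → Submodule ℂ M
  internal : Function.Bijective (DirectSum.coeLinearMap grc)
  eigen : ∀ (lam : ℂ) (w : M), w ∈ grc lam → W.act d.conformal 1 w = lam • w
  findim : ∀ lam : ℂ, FiniteDimensional ℂ (grc lam)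
  bounded : ∀ lam : ℂ, ∃ N : ℤ, ∀ n : ℤ, n < N → grc (lam + (n : ℂ)) = ⊥

/-- An admissible module is ordinary. -/
def AdmMod.IsOrdinary {d : VOA V} (A : AdmMod d M) : Prop :=
  Nonempty (OrdinaryStruct A.toWeakMod)

/-- A realization of the quotient associative algebra `V/Osub` with product induced by `mu`. -/
structure Realization (Osub : Submodule ℂ V) (mu : V → V → V) (one : V) where
  carrier : Type
  [ring : Ring carrier]
  [alg : Algebra ℂ carrier]
  emb : V →ₗ[ℂ] carrier
  surj : Function.Surjective emb
  ker_eq : LinearMap.ker emb = Osub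
  mul_compat : ∀ u v : V, emb (mu u v) = emb u * emb v
  one_compat : emb one = 1

/-- The realized algebra is semisimple. -/
def Realization.Semisimple {Osub : Submodule ℂ V} {mu : V → V → V} {one : V}
    (R : Realization Osub mu one) : Prop :=
  letI := R.ring; IsSemisimpleRing R.carrier

/-- The realized algebra is finite dimensional over `ℂ`. -/
def Realization.FinDim {Osub : Submodule ℂ V} {mu : V → V → V} {one : V}
    (R : Realization Osub mu one) : Prop :=
  letI := R.ring; letI := R.alg; FiniteDimensional ℂ R.carrier

/-- A module over the quotient algebra `V/Osub`, given as a representation of `V`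
killing `Osub` and multiplicative for `mu`. -/
structure RepOf (Osub : Submodule ℂ V) (mu : V → V → V) (one : V)
    (U : Type) [AddCommGroup U] [Module ℂ U] where
  rep : V →ₗ[ℂ] Module.End ℂ U
  kills : ∀ v ∈ Osub, rep v = 0
  mul_compat : ∀ u v : V, rep (mu u v) = rep u * rep v
  one_compat : rep one = 1

/-- Simplicity of such a representation. -/
def RepOf.IsSimple {Osub : Submodule ℂ V} {mu : V → V → V} {one : V}
    {U : Type} [AddCommGroup U] [Module ℂ U] (Z : RepOf Osub mu one U) : Prop :=
  (∃ u : U, u ≠ 0) ∧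
    ∀ P : Submodule ℂ U, (∀ v : V, ∀ x ∈ P, Z.rep v x ∈ P) → P = ⊥ ∨ P = ⊤

/-- Equivalence of two such representations. -/
def RepEquiv {Osub : Submodule ℂ V} {mu : V → V → V} {one : V}
    {U₁ U₂ : Type} [AddCommGroup U₁] [Module ℂ U₁] [AddCommGroup U₂] [Module ℂ U₂]
    (Z₁ : RepOf Osub mu one U₁) (Z₂ : RepOf Osub mu one U₂) : Prop :=
  ∃ e : U₁ ≃ₗ[ℂ] U₂, ∀ (v : V) (x : U₁), e (Z₁.rep v x) = Z₂.rep v (e x)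


section AuxCentral

open Finset


lemma cbinom_zero (n : ℤ) : cbinom n 0 = 1 := by simp [cbinom]

lemma cbinom_one (n : ℤ) : cbinom n 1 = (n : ℂ) := by simp [cbinom]

lemma fact_ne (k : ℕ) : ((Nat.factorial k : ℂ)) ≠ 0 := by
  exact_mod_cast Nat.cast_ne_zero.mpr (Nat.factorial_ne_zero k)

lemma cbinom_eq_zero {n : ℤ} {k : ℕ} (h0 : 0 ≤ n) (h : n < k) : cbinom n k = 0 := by
  have hm : n.toNat ∈ Finset.range k := by
    simp only [Finset.mem_range]; omega
  have : (∏ i ∈ Finset.range k, ((n : ℂ) - (i : ℂ))) = 0 := by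
    apply Finset.prod_eq_zero hm
    have : ((n.toNat : ℤ) : ℂ) = (n : ℂ) := by rw [Int.toNat_of_nonneg h0]
    push_cast at this ⊢
    rw [this]; ring
  simp [cbinom, this]

lemma cbinom_pascal (m : ℤ) (j : ℕ) :
    cbinom (m + 1) (j + 1) = cbinom m (j + 1) + cbinom m j := by
  unfold cbinom
  have h1 : ∏ i ∈ Finset.range (j+1), (((m+1 : ℤ) : ℂ) - (i : ℂ))
      = ((m:ℂ)+1) * ∏ i ∈ Finset.range j, ((m:ℂ) - (i:ℂ)) := by
    rw [Finset.prod_range_succ']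
    have e1 : ∀ i ∈ Finset.range j, (((m+1 : ℤ) : ℂ) - ((i+1 : ℕ) : ℂ)) = ((m:ℂ) - (i:ℂ)) := by
      intro i _; push_cast; ring
    rw [Finset.prod_congr rfl e1]
    push_cast; ring
  have h2 : ∏ i ∈ Finset.range (j+1), ((m : ℂ) - (i : ℂ))
      = (∏ i ∈ Finset.range j, ((m:ℂ) - (i:ℂ))) * ((m:ℂ) - j) := Finset.prod_range_succ _ _
  have h3 : (Nat.factorial (j+1) : ℂ) = (j+1) * (Nat.factorial j : ℂ) := by
    rw [Nat.factorial_succ]; push_cast; ring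
  rw [h1, h2, h3]
  have hj := fact_ne j
  have hj1 : ((j:ℂ)+1) ≠ 0 := by
    have : (0:ℝ) < j + 1 := by positivity
    intro hcon
    have := congrArg Complex.re hcon
    simp at this
    linarith
  field_simp
  ring

lemma cbinom_neg_one (k : ℕ) : cbinom (-1) k = (-1 : ℂ)^k := by
  have : ∏ i ∈ Finset.range k, (((-1 : ℤ) : ℂ) - (i : ℂ)) = (-1:ℂ)^k * (Nat.factorial k : ℂ) := by
    induction k with
    | zero => simp
    | succ n ih =>
      rw [Finset.prod_range_succ, ih, Nat.factorial_succ]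
      push_cast; ring
  rw [cbinom, this, mul_div_assoc, div_self (fact_ne k), mul_one]

lemma cbinom_subset (N : ℤ) {r j : ℕ} (h : r ≤ j) :
    cbinom N r * cbinom (N - r) (j - r) = cbinom N j * (j.choose r : ℂ) := by
  obtain ⟨t, rfl⟩ : ∃ t, j = r + t := ⟨j - r, by omega⟩
  rw [Nat.add_sub_cancel_left]
  unfold cbinom
  have hprod : ∏ i ∈ Finset.range (r + t), ((N:ℂ) - (i:ℂ))
      = (∏ i ∈ Finset.range r, ((N:ℂ) - (i:ℂ))) *
        ∏ i ∈ Finset.range t, (((N - r : ℤ):ℂ) - (i:ℂ)) := by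
    rw [Finset.prod_range_add]
    congr 1
    apply Finset.prod_congr rfl
    intro i _
    push_cast; ring
  have hfact : (((r+t).choose r : ℕ) : ℂ) * (Nat.factorial r : ℂ) * (Nat.factorial t : ℂ)
      = (Nat.factorial (r+t) : ℂ) := by
    have := Nat.choose_mul_factorial_mul_factorial (n := r + t) (k := r) (by omega)
    rw [Nat.add_sub_cancel_left] at this
    exact_mod_cast congrArg (Nat.cast : ℕ → ℂ) this
  rw [hprod]
  have h1 := fact_ne r
  have h2 := fact_ne t
  have h3 := fact_ne (r + t)
  field_simp
  rw [← hfact]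
  ring

lemma altsum_choose (j : ℕ) :
    ∑ r ∈ Finset.range (j+1), (-1:ℂ)^r * (j.choose r : ℂ) = if j = 0 then 1 else 0 := by
  have := Int.alternating_sum_range_choose (n := j)
  have h2 : ((∑ m ∈ Finset.range (j + 1), (-1:ℤ) ^ m * (j.choose m : ℤ) : ℤ) : ℂ)
      = ∑ r ∈ Finset.range (j+1), (-1:ℂ)^r * (j.choose r : ℂ) := by push_cast; rfl
  rw [← h2, this]
  split <;> simp

lemma A_eq (N : ℤ) (j : ℕ) :
    ∑ r ∈ Finset.range (j+1), (-1:ℂ)^r * cbinom N r * cbinom (N - r) (j - r)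
      = if j = 0 then 1 else 0 := by
  have : ∀ r ∈ Finset.range (j+1),
      (-1:ℂ)^r * cbinom N r * cbinom (N - r) (j - r)
        = cbinom N j * ((-1:ℂ)^r * (j.choose r : ℂ)) := by
    intro r hr
    rw [Finset.mem_range] at hr
    have := cbinom_subset N (r := r) (j := j) (by omega)
    rw [mul_assoc, this]; ring
  rw [Finset.sum_congr rfl this, ← Finset.mul_sum, altsum_choose]
  split
  · subst ‹j = 0›; simp [cbinom_zero]
  · simp

lemma Fid (N : ℤ) (k : ℕ) :
    ∑ r ∈ Finset.range (k+1), (-1:ℂ)^r * cbinom N r * cbinom (N + 1 - r) (k - r)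
      = if k ≤ 1 then 1 else 0 := by
  rcases Nat.eq_zero_or_pos k with hk | hk
  · subst hk; simp [cbinom_zero]
  · -- k ≥ 1
    obtain ⟨k', rfl⟩ : ∃ k', k = k' + 1 := ⟨k - 1, by omega⟩
    have split : ∀ r ∈ Finset.range (k'+1),
        (-1:ℂ)^r * cbinom N r * cbinom (N + 1 - r) (k' + 1 - r)
        = (-1:ℂ)^r * cbinom N r * cbinom (N - r) (k' + 1 - r)
          + (-1:ℂ)^r * cbinom N r * cbinom (N - r) (k' - r) := by
      intro r hr
      rw [Finset.mem_range] at hr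
      have h1 : k' + 1 - r = (k' - r) + 1 := by omega
      have h2 : (N : ℤ) + 1 - r = (N - r) + 1 := by ring
      rw [h1, h2, cbinom_pascal]
      ring
    rw [Finset.sum_range_succ, Finset.sum_congr rfl split, Finset.sum_add_distrib]
    have hlast : (-1:ℂ)^(k'+1) * cbinom N (k'+1) * cbinom (N + 1 - ((k'+1 : ℕ) : ℤ)) (k'+1 - (k'+1))
        = (-1:ℂ)^(k'+1) * cbinom N (k'+1) * cbinom (N - ((k'+1 : ℕ) : ℤ)) (k'+1 - (k'+1)) := by
      simp [cbinom_zero]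
    rw [hlast]
    have hA1 : ∑ r ∈ Finset.range (k'+1), (-1:ℂ)^r * cbinom N r * cbinom (N - r) (k'+1 - r)
        + (-1:ℂ)^(k'+1) * cbinom N (k'+1) * cbinom (N - (k'+1)) (k'+1 - (k'+1))
        = ∑ r ∈ Finset.range (k'+2), (-1:ℂ)^r * cbinom N r * cbinom (N - r) (k'+1 - r) := by
      exact (Finset.sum_range_succ
        (fun r => (-1:ℂ)^r * cbinom N r * cbinom (N - (r:ℤ)) (k'+1 - r)) (k'+1)).symm
    have hA2 := A_eq N (k'+1)
    have hA3 := A_eq N k'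
    -- rearrange: (∑_{r<k'+1} u_r) + t_{k'+1} + ∑_{r<k'+1} v_r = A_{k'+1} + A_{k'}
    have : ∑ r ∈ Finset.range (k' + 1), (-1:ℂ) ^ r * cbinom N r * cbinom (N - ↑r) (k' + 1 - r) +
        ∑ r ∈ Finset.range (k' + 1), (-1:ℂ) ^ r * cbinom N r * cbinom (N - ↑r) (k' - r) +
        (-1:ℂ) ^ (k' + 1) * cbinom N (k' + 1) * cbinom (N - ↑(k' + 1)) (k' + 1 - (k' + 1)) =
        (∑ r ∈ Finset.range (k'+2), (-1:ℂ)^r * cbinom N r * cbinom (N - r) (k'+1 - r))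
        + ∑ r ∈ Finset.range (k' + 1), (-1:ℂ) ^ r * cbinom N r * cbinom (N - ↑r) (k' - r) := by
      rw [← hA1]; push_cast; ring
    rw [this, hA2, hA3]
    rcases Nat.eq_zero_or_pos k' with h0 | h0
    · subst h0; norm_num
    · have h1 : ¬ (k' + 1 = 0) := by omega
      have h2 : ¬ (k' = 0) := by omega
      have h3 : ¬ (k' + 1 + 1 ≤ 1) := by omega
      simp [h1, h2, h3]


lemma cbinom_shift (M : ℤ) (k : ℕ) :
    cbinom (M + k - 1) k = (∏ t ∈ Finset.range k, ((M:ℂ) + t)) / (Nat.factorial k : ℂ) := by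
  unfold cbinom
  congr 1
  rw [← Finset.prod_range_reflect]
  apply Finset.prod_congr rfl
  intro j hj
  rw [Finset.mem_range] at hj
  have : ((k - 1 - j : ℕ) : ℂ) = (k : ℂ) - 1 - j := by
    have h1 : (1:ℕ) + j ≤ k := by omega
    push_cast [Nat.cast_sub (by omega : j ≤ k - 1), Nat.cast_sub (by omega : 1 ≤ k)]
    ring
  rw [this]
  push_cast
  ring

lemma tri_sum {A : Type*} [AddCommMonoid A] (K : ℕ) (F : ℕ → ℕ → A)
    (hF : ∀ r j : ℕ, K ≤ r + j → F r j = 0) :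
    ∑ r ∈ Finset.range K, ∑ j ∈ Finset.range K, F r j
      = ∑ s ∈ Finset.range K, ∑ r ∈ Finset.range (s+1), F r (s - r) := by
  classical
  have h1 : ∀ s, ∑ r ∈ Finset.range (s+1), F r (s-r)
      = ∑ p ∈ Finset.HasAntidiagonal.antidiagonal s, F p.1 p.2 :=
    fun s => (Finset.Nat.sum_antidiagonal_eq_sum_range_succ_mk (fun p => F p.1 p.2) s).symm
  rw [Finset.sum_congr rfl (fun s _ => h1 s)]
  have hd : (↑(Finset.range K) : Set ℕ).PairwiseDisjoint (fun s => Finset.HasAntidiagonal.antidiagonal s) := by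
    intro x _ y _ hxy
    simp only [Function.onFun, Finset.disjoint_left]
    intro p hp hq
    rw [Finset.HasAntidiagonal.mem_antidiagonal] at hp hq
    exact hxy (by omega)
  rw [← Finset.sum_biUnion hd, ← Finset.sum_product']
  have hsub : (Finset.range K).biUnion (fun s => Finset.HasAntidiagonal.antidiagonal s)
      ⊆ Finset.range K ×ˢ Finset.range K := by
    intro p hp
    rw [Finset.mem_biUnion] at hp
    obtain ⟨s, hs, hps⟩ := hp
    rw [Finset.mem_range] at hs
    rw [Finset.HasAntidiagonal.mem_antidiagonal] at hps
    rw [Finset.mem_product, Finset.mem_range, Finset.mem_range]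
    omega
  refine (Finset.sum_subset hsub ?_).symm
  intro p _ hp
  apply hF
  by_contra hc
  apply hp
  rw [Finset.mem_biUnion]
  exact ⟨p.1 + p.2, Finset.mem_range.mpr (by omega), Finset.HasAntidiagonal.mem_antidiagonal.mpr rfl⟩

namespace VOA

lemma mode_zero (d : VOA V) (n : ℤ) : d.mode 0 n = 0 := by
  simpa using d.mode_smul 0 0 n

lemma hres_zero (d : VOA V) (N k : ℤ) (v : V) : d.hres N k 0 v = 0 := by
  unfold VOA.hres
  simp only [d.mode_zero, LinearMap.zero_apply, smul_zero, finsum_zero]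

noncomputable def dEquiv (d : VOA V) : (DirectSum ℤ fun n => ↥(d.grading n)) ≃ₗ[ℂ] V :=
  LinearEquiv.ofBijective (DirectSum.coeLinearMap d.grading) d.internal

lemma proj_apply (d : VOA V) (n : ℤ) (u : V) :
    d.proj n u = ((d.dEquiv.symm u) n : V) := rfl

lemma proj_mem (d : VOA V) (n : ℤ) (u : V) : d.proj n u ∈ d.grading n := by
  rw [d.proj_apply]
  exact SetLike.coe_mem _

lemma proj_of_mem (d : VOA V) {n : ℤ} {u : V} (h : u ∈ d.grading n) (m : ℤ) :
    d.proj m u = if m = n then u else 0 := by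
  have hu : d.dEquiv (DirectSum.of (fun i => d.grading i) n ⟨u, h⟩) = u := by
    simp [dEquiv, LinearEquiv.ofBijective_apply, DirectSum.coeLinearMap_of]
  have hsymm : d.dEquiv.symm u = DirectSum.of (fun i => d.grading i) n ⟨u, h⟩ := by
    rw [LinearEquiv.symm_apply_eq]
    exact hu.symm
  rw [d.proj_apply, hsymm]
  by_cases hmn : m = n
  · subst hmn
    rw [DirectSum.of_eq_same, if_pos rfl]
  · rw [DirectSum.of_eq_of_ne _ _ _ hmn, if_neg hmn]
    rfl

lemma proj_support_finite (d : VOA V) (u : V) :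
    (Function.support fun n => d.proj n u).Finite := by
  classical
  apply Set.Finite.subset (DFinsupp.support (d.dEquiv.symm u)).finite_toSet
  intro n hn
  rw [Function.mem_support] at hn
  rw [Finset.mem_coe, DFinsupp.mem_support_iff]
  intro hz
  apply hn
  rw [d.proj_apply, hz]
  rfl

lemma sum_proj (d : VOA V) (u : V) {S : Finset ℤ} (hS : ∀ n, d.proj n u ≠ 0 → n ∈ S) :
    ∑ n ∈ S, d.proj n u = u := by
  classical
  set x := d.dEquiv.symm u with hx
  have hu : (DirectSum.coeLinearMap d.grading) x = u := d.dEquiv.apply_symm_apply u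
  have h1 : ∑ i ∈ DFinsupp.support x, d.proj i u = u := by
    conv_rhs => rw [← hu, ← DirectSum.sum_support_of x]
    rw [map_sum]
    apply Finset.sum_congr rfl
    intro i _
    rw [d.proj_apply, DirectSum.coeLinearMap_of]
  have hsub : DFinsupp.support x ⊆ S := by
    intro i hi
    apply hS
    rw [DFinsupp.mem_support_iff] at hi
    rw [d.proj_apply]
    intro hz
    exact hi (Subtype.ext hz)
  have hzero : ∀ i ∈ S, i ∉ DFinsupp.support x → d.proj i u = 0 := by
    intro i _ hi
    rw [DFinsupp.notMem_support_iff] at hi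
    rw [d.proj_apply, hi]
    rfl
  rw [← Finset.sum_subset hsub hzero]
  exact h1

lemma mode_neg_vac (d : VOA V) (k : ℕ) (x : V) :
    d.mode x (-(k:ℤ) - 1) d.vacuum
      = ((Nat.factorial k : ℂ))⁻¹ • ((d.mode d.conformal 0)^k) x := by
  induction k generalizing x with
  | zero => simp [d.creation_neg_one x]
  | succ k ih =>
    have hder := d.Lneg1_deriv x (-(k:ℤ) - 1)
    have h1 : d.mode (d.mode d.conformal 0 x) (-(k:ℤ)-1) d.vacuum
        = ((k:ℂ)+1) • d.mode x (-(k:ℤ)-2) d.vacuum := by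
      rw [hder, show (-(k:ℤ)-1) - 1 = -(k:ℤ)-2 by ring]
      simp only [LinearMap.smul_apply]
      congr 1
      push_cast
      ring
    have hk1 : ((k:ℂ)+1) ≠ 0 := by
      have : ((k:ℂ)+1) = ((k+1 : ℕ) : ℂ) := by push_cast; ring
      rw [this]
      exact Nat.cast_ne_zero.mpr (Nat.succ_ne_zero k)
    have h4 : ((k:ℂ)+1) • d.mode x (-(k:ℤ)-2) d.vacuum
        = ((Nat.factorial k : ℂ))⁻¹ • ((d.mode d.conformal 0)^k) (d.mode d.conformal 0 x) := by
      rw [← h1, ih]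
    have h5 := congrArg (fun z => (((k:ℂ)+1))⁻¹ • z) h4
    simp only [inv_smul_smul₀ hk1] at h5
    rw [show (-((k+1:ℕ):ℤ) - 1) = -(k:ℤ)-2 by push_cast; ring, h5, smul_smul]
    congr 1
    rw [Nat.factorial_succ]
    push_cast
    rw [mul_inv]

lemma hres_two_vac (d : VOA V) (N : ℤ) (y : V) :
    d.hres N 2 y d.vacuum = d.mode d.conformal 0 y + (N:ℂ) • y := by
  unfold VOA.hres
  rw [finsum_eq_finset_sum_of_support_subset _ (s := Finset.range 2) ?_]
  · rw [Finset.sum_range_succ, Finset.sum_range_one, cbinom_zero, cbinom_one, one_smul]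
    congr 1
    · rw [show ((0:ℕ):ℤ) - 2 = -((1:ℕ):ℤ) - 1 by norm_num]
      rw [d.mode_neg_vac 1 y]
      simp
    · rw [show ((1:ℕ):ℤ) - 2 = -1 by norm_num, d.creation_neg_one]
  · intro i hi
    rw [Function.mem_support] at hi
    rw [Finset.coe_range, Set.mem_Iio]
    by_contra hK
    apply hi
    rw [d.creation y _ (by omega : (0:ℤ) ≤ (i:ℤ) - 2), smul_zero]

lemma LL_mem (d : VOA V) (x : V) :
    d.mode d.conformal 0 x + d.mode d.conformal 1 x ∈ d.Ozhu := by
  classical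
  have hmem : d.circ x d.vacuum ∈ d.Ozhu := Submodule.subset_span ⟨x, d.vacuum, rfl⟩
  have heq : d.circ x d.vacuum = d.mode d.conformal 0 x + d.mode d.conformal 1 x := by
    unfold VOA.circ VOA.bres
    set S := (d.proj_support_finite x).toFinset with hSdef
    have hsum : ∑ n ∈ S, d.proj n x = x := by
      apply d.sum_proj
      intro n hn
      rw [hSdef, Set.Finite.mem_toFinset, Function.mem_support]
      exact hn
    rw [finsum_eq_finset_sum_of_support_subset _ (s := S) ?_]
    · have hterm : ∀ n ∈ S, d.hres (n+0) 2 (d.proj n x) d.vacuum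
          = d.mode d.conformal 0 (d.proj n x) + d.mode d.conformal 1 (d.proj n x) := by
        intro n _
        rw [d.hres_two_vac]
        congr 1
        rw [d.L0_eigen n _ (d.proj_mem n x)]
        congr 1
        push_cast
        ring
      rw [Finset.sum_congr rfl hterm, Finset.sum_add_distrib, ← map_sum, ← map_sum, hsum]
    · intro n hn
      rw [Function.mem_support] at hn
      rw [Finset.mem_coe]
      by_contra hK
      apply hn
      have : d.proj n x = 0 := by
        by_contra hz
        apply hK
        rw [hSdef, Set.Finite.mem_toFinset, Function.mem_support]
        exact hz
      rw [this, d.hres_zero]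
  rw [← heq]
  exact hmem

lemma Lpow_mem (d : VOA V) :
    ∀ (k : ℕ) (M : ℤ) (y : V), y ∈ d.grading M →
    ((d.mode d.conformal 0)^k) y
      - ((-1:ℂ)^k * ∏ t ∈ Finset.range k, ((M:ℂ) + t)) • y ∈ d.Ozhu := by
  intro k
  induction k with
  | zero =>
    intro M y _
    simp
  | succ k ih =>
    intro M y hy
    have hLy : d.mode d.conformal 0 y ∈ d.grading (M+1) := by
      have h := d.grading_mode 2 M 0 d.conformal y d.conformal_mem hy
      rwa [show (2:ℤ) + M - 0 - 1 = M + 1 by ring] at h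
    have h1 := ih (M+1) (d.mode d.conformal 0 y) hLy
    have h2 : d.mode d.conformal 0 y + (M:ℂ) • y ∈ d.Ozhu := by
      have h3 := d.LL_mem y
      rwa [d.L0_eigen M y hy] at h3
    set c : ℂ := (-1:ℂ)^k * ∏ t ∈ Finset.range k, (((M+1:ℤ):ℂ) + t) with hc
    have key : ((d.mode d.conformal 0)^(k+1)) y
        - ((-1:ℂ)^(k+1) * ∏ t ∈ Finset.range (k+1), ((M:ℂ)+t)) • y
        = (((d.mode d.conformal 0)^k) (d.mode d.conformal 0 y) - c • (d.mode d.conformal 0 y))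
          + c • (d.mode d.conformal 0 y + (M:ℂ) • y) := by
      have hpow : ((d.mode d.conformal 0)^(k+1)) y
          = ((d.mode d.conformal 0)^k) (d.mode d.conformal 0 y) := by
        rw [pow_succ, Module.End.mul_apply]
      have hcoef : (-1:ℂ)^(k+1) * ∏ t ∈ Finset.range (k+1), ((M:ℂ)+t) = -(c * M) := by
        rw [Finset.prod_range_succ']
        have he : ∀ t ∈ Finset.range k, ((M:ℂ) + ((t+1:ℕ):ℂ)) = (((M+1:ℤ):ℂ) + t) := by
          intro t _
          push_cast
          ring
        rw [Finset.prod_congr rfl he, hc, pow_succ]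
        push_cast
        ring
      rw [hpow, hcoef, neg_smul, sub_neg_eq_add, smul_add, smul_smul]
      abel
    rw [key]
    exact Submodule.add_mem _ h1 (Submodule.smul_mem _ _ h2)

lemma key_mem (d : VOA V) {N : ℤ} {a : V} (ha : a ∈ d.grading N) {K : ℕ}
    (hgz : ∀ m : ℤ, (K:ℤ) - 1 ≤ m → d.mode d.conformal m a = 0) (r : ℕ) :
    (-1:ℂ)^r • d.mode a ((r:ℤ)-1) d.conformal
      - (d.mode d.conformal ((r:ℤ)-1) a
        + ∑ i ∈ Finset.range K, cbinom (N+1-(r:ℤ)) (i+1) • d.mode d.conformal ((r:ℤ)+i) a)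
      ∈ d.Ozhu := by
  classical
  have hb := d.borcherds (-1) (-1) (r:ℤ) d.conformal a d.vacuum
  have hRHS : (∑ᶠ i : ℕ, ((-1 : ℂ) ^ i * cbinom (r:ℤ) i) •
      (d.mode d.conformal ((-1) + (r:ℤ) - i) (d.mode a ((-1) + i) d.vacuum)
        - (-1 : ℂ) ^ (r:ℤ) • d.mode a ((-1) + (r:ℤ) - i) (d.mode d.conformal ((-1) + i) d.vacuum)))
      = d.mode d.conformal ((r:ℤ)-1) a - (-1:ℂ)^r • d.mode a ((r:ℤ)-1) d.conformal := by
    rw [finsum_eq_single _ 0 ?_]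
    · rw [show ((-1) + (r:ℤ) - ((0:ℕ):ℤ)) = (r:ℤ) - 1 by omega,
        show ((-1) + ((0:ℕ):ℤ)) = -1 by omega,
        d.creation_neg_one, d.creation_neg_one, cbinom_zero, zpow_natCast]
      try simp
    · intro i hi
      have hi1 : (1:ℤ) ≤ (i:ℤ) := by exact_mod_cast Nat.one_le_iff_ne_zero.mpr hi
      have h1 : d.mode a ((-1) + (i:ℤ)) d.vacuum = 0 := d.creation a _ (by omega)
      have h2 : d.mode d.conformal ((-1) + (i:ℤ)) d.vacuum = 0 := d.creation _ _ (by omega)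
      rw [h1, h2]
      simp
  rw [hRHS] at hb
  have hsupp : Function.support (fun i : ℕ => cbinom (-1) i •
      d.mode (d.mode d.conformal ((r:ℤ) + i) a) ((-1) + (-1) - i) d.vacuum)
      ⊆ ↑(Finset.range K) := by
    intro i hi
    rw [Function.mem_support] at hi
    rw [Finset.coe_range, Set.mem_Iio]
    by_contra hK
    apply hi
    rw [hgz ((r:ℤ)+i) (by omega), d.mode_zero, LinearMap.zero_apply, smul_zero]
  rw [finsum_eq_finset_sum_of_support_subset _ hsupp] at hb
  have key : (-1:ℂ)^r • d.mode a ((r:ℤ)-1) d.conformal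
      - (d.mode d.conformal ((r:ℤ)-1) a
        + ∑ i ∈ Finset.range K, cbinom (N+1-(r:ℤ)) (i+1) • d.mode d.conformal ((r:ℤ)+i) a)
      = -(∑ i ∈ Finset.range K,
          (cbinom (-1) i • d.mode (d.mode d.conformal ((r:ℤ) + i) a) ((-1) + (-1) - i) d.vacuum
            + cbinom (N+1-(r:ℤ)) (i+1) • d.mode d.conformal ((r:ℤ)+i) a)) := by
    rw [Finset.sum_add_distrib, hb]
    abel
  rw [key]
  apply Submodule.neg_mem
  apply Submodule.sum_mem
  intro i _
  have hg : d.mode d.conformal ((r:ℤ)+i) a ∈ d.grading (N + 1 - (r:ℤ) - i) := by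
    have h := d.grading_mode 2 N ((r:ℤ)+i) d.conformal a d.conformal_mem ha
    rwa [show (2:ℤ) + N - ((r:ℤ)+(i:ℤ)) - 1 = N+1-(r:ℤ)-(i:ℤ) by ring] at h
  have hmv : d.mode (d.mode d.conformal ((r:ℤ)+i) a) ((-1) + (-1) - (i:ℤ)) d.vacuum
      = ((Nat.factorial (i+1) : ℂ))⁻¹ •
        ((d.mode d.conformal 0)^(i+1)) (d.mode d.conformal ((r:ℤ)+i) a) := by
    have h := d.mode_neg_vac (i+1) (d.mode d.conformal ((r:ℤ)+i) a)
    rwa [show -(((i+1:ℕ)):ℤ) - 1 = (-1) + (-1) - (i:ℤ) by push_cast; ring] at h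
  have hLp := d.Lpow_mem (i+1) _ _ hg
  have hcb : cbinom (N + 1 - (r:ℤ)) (i+1)
      = (∏ t ∈ Finset.range (i+1), ((((N + 1 - (r:ℤ) - (i:ℤ) : ℤ)):ℂ) + (t:ℂ))) / ((i+1).factorial : ℂ) := by
    have h := cbinom_shift (N+1-(r:ℤ)-(i:ℤ)) (i+1)
    rwa [show (N+1-(r:ℤ)-(i:ℤ)) + ((i+1:ℕ):ℤ) - 1 = N+1-(r:ℤ) by push_cast; ring] at h
  have hp : (-1:ℂ)^i * (-1:ℂ)^(i+1) = -1 := by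
    rw [← pow_add]
    exact Odd.neg_one_pow ⟨i, by ring⟩
  have heq : cbinom (-1) i • d.mode (d.mode d.conformal ((r:ℤ)+i) a) ((-1) + (-1) - (i:ℤ)) d.vacuum
      + cbinom (N+1-(r:ℤ)) (i+1) • d.mode d.conformal ((r:ℤ)+i) a
      = ((-1:ℂ)^i * ((Nat.factorial (i+1):ℂ))⁻¹) •
        (((d.mode d.conformal 0)^(i+1)) (d.mode d.conformal ((r:ℤ)+i) a)
          - ((-1:ℂ)^(i+1) * ∏ t ∈ Finset.range (i+1), ((((N + 1 - (r:ℤ) - (i:ℤ) : ℤ)):ℂ) + (t:ℂ))) •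
            d.mode d.conformal ((r:ℤ)+i) a) := by
    have hsc : cbinom (N+1-(r:ℤ)) (i+1)
        = -(((-1:ℂ)^i * ((Nat.factorial (i+1):ℂ))⁻¹) * ((-1:ℂ)^(i+1) *
            ∏ t ∈ Finset.range (i+1), ((((N + 1 - (r:ℤ) - (i:ℤ) : ℤ)):ℂ) + (t:ℂ)))) := by
      rw [hcb, div_eq_mul_inv]
      linear_combination (((Nat.factorial (i+1):ℂ))⁻¹ *
        ∏ t ∈ Finset.range (i+1), ((((N + 1 - (r:ℤ) - (i:ℤ) : ℤ)):ℂ) + (t:ℂ))) * hp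
    rw [cbinom_neg_one, hmv, hsc]
    module
  rw [heq]
  exact Submodule.smul_mem _ _ hLp

lemma cbinom_two_two : cbinom 2 2 = 1 := by
  norm_num [cbinom, Finset.prod_range_succ]

lemma star_conf (d : VOA V) (b : V) :
    d.star d.conformal b = d.mode d.conformal (-1) b + (2:ℂ) • d.mode d.conformal 0 b
      + d.mode d.conformal 1 b := by
  classical
  unfold VOA.star VOA.bres
  rw [finsum_eq_single _ 2 ?_]
  · rw [d.proj_of_mem d.conformal_mem, if_pos rfl, show ((2:ℤ) + 0) = 2 by ring]
    unfold VOA.hres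
    rw [finsum_eq_finset_sum_of_support_subset _ (s := Finset.range 3) ?_]
    · rw [Finset.sum_range_succ, Finset.sum_range_succ, Finset.sum_range_one,
        show ((0:ℕ):ℤ) - 1 = -1 by norm_num, show ((1:ℕ):ℤ) - 1 = 0 by norm_num,
        show ((2:ℕ):ℤ) - 1 = 1 by norm_num,
        cbinom_zero, cbinom_one, cbinom_two_two, one_smul, one_smul,
        show (((2:ℤ)):ℂ) = (2:ℂ) by norm_num]
    · intro i hi
      rw [Function.mem_support] at hi
      rw [Finset.coe_range, Set.mem_Iio]
      by_contra hK
      apply hi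
      rw [cbinom_eq_zero (by norm_num) (by omega), zero_smul]
  · intro n hn
    rw [d.proj_of_mem d.conformal_mem, if_neg hn, d.hres_zero]

lemma star_hom (d : VOA V) {N : ℤ} {a : V} (ha : a ∈ d.grading N) {K : ℕ}
    (haz : ∀ m : ℤ, (K:ℤ) - 1 ≤ m → d.mode a m d.conformal = 0) :
    d.star a d.conformal
      = ∑ i ∈ Finset.range K, cbinom N i • d.mode a ((i:ℤ)-1) d.conformal := by
  classical
  unfold VOA.star VOA.bres
  rw [finsum_eq_single _ N ?_]
  · rw [d.proj_of_mem ha, if_pos rfl, add_zero]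
    unfold VOA.hres
    rw [finsum_eq_finset_sum_of_support_subset _ (s := Finset.range K) ?_]
    intro i hi
    rw [Function.mem_support] at hi
    rw [Finset.coe_range, Set.mem_Iio]
    by_contra hK
    apply hi
    rw [haz _ (by omega), smul_zero]
  · intro n hn
    rw [d.proj_of_mem ha, if_neg hn, d.hres_zero]

lemma hom_case (d : VOA V) {N : ℤ} {a : V} (ha : a ∈ d.grading N) :
    d.star d.conformal a - d.star a d.conformal ∈ d.Ozhu := by
  classical
  obtain ⟨Tw, hTw⟩ := d.truncation d.conformal a
  obtain ⟨Ta, hTa⟩ := d.truncation a d.conformal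
  set K0 : ℤ := max 2 (max (Tw+1) (Ta+1)) with hK0
  have hK0pos : (0:ℤ) ≤ K0 := le_trans (by norm_num) (le_max_left _ _)
  set K : ℕ := K0.toNat with hK
  have hKcast : (K:ℤ) = K0 := Int.toNat_of_nonneg hK0pos
  have hK2' : (2:ℤ) ≤ K0 := le_max_left _ _
  have hK2 : 2 ≤ K := by omega
  have hgz : ∀ m : ℤ, (K:ℤ) - 1 ≤ m → d.mode d.conformal m a = 0 := by
    intro m hm
    apply hTw
    have h7 : Tw + 1 ≤ K0 := le_trans (le_max_left _ _) (le_max_right _ _)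
    omega
  have haz : ∀ m : ℤ, (K:ℤ) - 1 ≤ m → d.mode a m d.conformal = 0 := by
    intro m hm
    apply hTa
    have h7 : Ta + 1 ≤ K0 := le_trans (le_max_right _ _) (le_max_right _ _)
    omega
  have hX1 : d.star a d.conformal
      - (∑ r ∈ Finset.range K, ((-1:ℂ)^r * cbinom N r) •
          (d.mode d.conformal ((r:ℤ)-1) a
            + ∑ i ∈ Finset.range K, cbinom (N+1-(r:ℤ)) (i+1) • d.mode d.conformal ((r:ℤ)+i) a))
      ∈ d.Ozhu := by
    rw [d.star_hom ha haz, ← Finset.sum_sub_distrib]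
    apply Submodule.sum_mem
    intro r _
    have hP := d.key_mem ha hgz r
    have hsq : (-1:ℂ)^r * (-1:ℂ)^r = 1 := by
      rw [← pow_add]
      exact Even.neg_one_pow ⟨r, rfl⟩
    have h5 := Submodule.smul_mem d.Ozhu ((-1:ℂ)^r * cbinom N r) hP
    have heq : cbinom N r • d.mode a ((r:ℤ)-1) d.conformal
        - ((-1:ℂ)^r * cbinom N r) •
          (d.mode d.conformal ((r:ℤ)-1) a
            + ∑ i ∈ Finset.range K, cbinom (N+1-(r:ℤ)) (i+1) • d.mode d.conformal ((r:ℤ)+i) a)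
        = ((-1:ℂ)^r * cbinom N r) •
          ((-1:ℂ)^r • d.mode a ((r:ℤ)-1) d.conformal
            - (d.mode d.conformal ((r:ℤ)-1) a
              + ∑ i ∈ Finset.range K, cbinom (N+1-(r:ℤ)) (i+1) • d.mode d.conformal ((r:ℤ)+i) a)) := by
      rw [smul_sub, smul_smul]
      congr 2
      linear_combination (- cbinom N r) * hsq
    rw [heq]
    exact h5
  set F : ℕ → ℕ → V := fun r j =>
    ((-1:ℂ)^r * cbinom N r * cbinom (N+1-(r:ℤ)) j) • d.mode d.conformal ((r:ℤ)+(j:ℤ)-1) a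
    with hF
  have hX2 : (∑ r ∈ Finset.range K, ((-1:ℂ)^r * cbinom N r) •
          (d.mode d.conformal ((r:ℤ)-1) a
            + ∑ i ∈ Finset.range K, cbinom (N+1-(r:ℤ)) (i+1) • d.mode d.conformal ((r:ℤ)+i) a))
      = d.mode d.conformal (-1) a + d.mode d.conformal 0 a := by
    have step1 : ∀ r ∈ Finset.range K, ((-1:ℂ)^r * cbinom N r) •
          (d.mode d.conformal ((r:ℤ)-1) a
            + ∑ i ∈ Finset.range K, cbinom (N+1-(r:ℤ)) (i+1) • d.mode d.conformal ((r:ℤ)+i) a)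
        = ∑ j ∈ Finset.range (K+1), F r j := by
      intro r _
      simp only [hF]
      rw [Finset.sum_range_succ']
      have hj : ∀ j ∈ Finset.range K,
          ((-1:ℂ)^r * cbinom N r * cbinom (N+1-(r:ℤ)) (j+1)) •
              d.mode d.conformal ((r:ℤ)+((j+1:ℕ):ℤ)-1) a
          = ((-1:ℂ)^r * cbinom N r) •
              (cbinom (N+1-(r:ℤ)) (j+1) • d.mode d.conformal ((r:ℤ)+(j:ℤ)) a) := by
        intro j _
        rw [smul_smul, show (r:ℤ)+((j+1:ℕ):ℤ)-1 = (r:ℤ)+(j:ℤ) by omega, mul_assoc]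
      rw [Finset.sum_congr rfl hj, cbinom_zero, mul_one,
        show (r:ℤ)+((0:ℕ):ℤ)-1 = (r:ℤ)-1 by omega,
        ← Finset.smul_sum, ← smul_add, add_comm (d.mode d.conformal ((r:ℤ)-1) a)]
    rw [Finset.sum_congr rfl step1]
    have hpad : ∑ r ∈ Finset.range K, ∑ j ∈ Finset.range (K+1), F r j
        = ∑ r ∈ Finset.range (K+1), ∑ j ∈ Finset.range (K+1), F r j := by
      rw [Finset.sum_range_succ]
      have hz : ∑ j ∈ Finset.range (K+1), F K j = 0 := by
        apply Finset.sum_eq_zero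
        intro j _
        simp only [hF]
        rw [hgz ((K:ℤ)+(j:ℤ)-1) (by omega), smul_zero]
      rw [hz, add_zero]
    rw [hpad, tri_sum (K+1) F ?_]
    · have hdiag : ∀ s ∈ Finset.range (K+1), ∑ r ∈ Finset.range (s+1), F r (s-r)
          = (if s ≤ 1 then (1:ℂ) else 0) • d.mode d.conformal ((s:ℤ)-1) a := by
        intro s _
        have hterm : ∀ r ∈ Finset.range (s+1), F r (s-r)
            = ((-1:ℂ)^r * cbinom N r * cbinom (N+1-(r:ℤ)) (s-r)) •
                d.mode d.conformal ((s:ℤ)-1) a := by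
          intro r hr
          rw [Finset.mem_range] at hr
          simp only [hF]
          rw [show (r:ℤ)+((s-r:ℕ):ℤ)-1 = (s:ℤ)-1 by omega]
        rw [Finset.sum_congr rfl hterm, ← Finset.sum_smul, Fid N s]
      rw [Finset.sum_congr rfl hdiag,
        ← Finset.sum_subset (Finset.range_subset_range.mpr (by omega : 2 ≤ K+1)) ?_]
      · rw [Finset.sum_range_succ, Finset.sum_range_one]
        norm_num
      · intro s _ hs2
        have h8 : 2 ≤ s := by
          rw [Finset.mem_range] at hs2
          omega
        rw [if_neg (by omega), zero_smul]
    · intro r j hrj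
      simp only [hF]
      rw [hgz ((r:ℤ)+(j:ℤ)-1) (by omega), smul_zero]
  have hgoal : d.star d.conformal a - d.star a d.conformal
      = (d.mode d.conformal 0 a + d.mode d.conformal 1 a)
        - (d.star a d.conformal
          - (∑ r ∈ Finset.range K, ((-1:ℂ)^r * cbinom N r) •
              (d.mode d.conformal ((r:ℤ)-1) a
                + ∑ i ∈ Finset.range K, cbinom (N+1-(r:ℤ)) (i+1) •
                    d.mode d.conformal ((r:ℤ)+i) a))) := by
    rw [d.star_conf a, hX2, two_smul]
    abel
  rw [hgoal]
  exact Submodule.sub_mem _ (d.LL_mem a) hX1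

lemma central (d : VOA V) (a : V) :
    d.star d.conformal a - d.star a d.conformal ∈ d.Ozhu := by
  classical
  set S := (d.proj_support_finite a).toFinset with hSdef
  have hmemS : ∀ n, d.proj n a ≠ 0 → n ∈ S := by
    intro n hn
    rw [hSdef, Set.Finite.mem_toFinset, Function.mem_support]
    exact hn
  have hzeroS : ∀ n, n ∉ S → d.proj n a = 0 := by
    intro n hn
    by_contra h
    exact hn (hmemS n h)
  have hsum : ∑ n ∈ S, d.proj n a = a := d.sum_proj a hmemS
  have h1 : d.star d.conformal a = ∑ n ∈ S, d.star d.conformal (d.proj n a) := by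
    have hc : ∀ n ∈ S, d.star d.conformal (d.proj n a)
        = d.mode d.conformal (-1) (d.proj n a) + (2:ℂ) • d.mode d.conformal 0 (d.proj n a)
          + d.mode d.conformal 1 (d.proj n a) := fun n _ => d.star_conf _
    rw [Finset.sum_congr rfl hc, d.star_conf a]
    conv_lhs => rw [← hsum]
    rw [map_sum, map_sum, map_sum, Finset.smul_sum, ← Finset.sum_add_distrib,
      ← Finset.sum_add_distrib]
  have h2 : d.star a d.conformal = ∑ n ∈ S, d.star (d.proj n a) d.conformal := by
    unfold VOA.star VOA.bres
    rw [finsum_eq_finset_sum_of_support_subset _ (s := S) ?_]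
    · apply Finset.sum_congr rfl
      intro n _
      rw [finsum_eq_single (fun m => d.hres (m+0) 1 (d.proj m (d.proj n a)) d.conformal) n ?_]
      · rw [d.proj_of_mem (d.proj_mem n a), if_pos rfl]
      · intro m hm
        show d.hres (m+0) 1 (d.proj m (d.proj n a)) d.conformal = 0
        rw [d.proj_of_mem (d.proj_mem n a), if_neg hm, d.hres_zero]
    · intro n hn
      rw [Function.mem_support] at hn
      rw [Finset.mem_coe]
      by_contra hK
      apply hn
      rw [hzeroS n hK, d.hres_zero]
  rw [h1, h2, ← Finset.sum_sub_distrib]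
  exact Submodule.sum_mem _ fun n _ => d.hom_case (d.proj_mem n a)

end VOA

end AuxCentral

/-- the image of the conformal vector is central in `A(V)`. -/
theorem stmt3 (d : VOA V) (mul : (V ⧸ d.Ozhu) → (V ⧸ d.Ozhu) → (V ⧸ d.Ozhu))
    (hmul : ∀ u v : V, mul (d.Ozhu.mkQ u) (d.Ozhu.mkQ v) = d.Ozhu.mkQ (d.star u v)) :
    ∀ a : V,
      mul (d.Ozhu.mkQ d.conformal) (d.Ozhu.mkQ a)
        = mul (d.Ozhu.mkQ a) (d.Ozhu.mkQ d.conformal) := by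
  intro a
  rw [hmul, hmul, Submodule.mkQ_apply, Submodule.mkQ_apply, Submodule.Quotient.eq]
  exact d.central a
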